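/- arXiv:2602.07479 — 2 statements merged into one kernel-verified Lean document; each statement's English description precedes it below -/
import Mathlib

section
/- Let L: ℝ^{m×n} → ℝ be differentiable with ‖∇L(W)‖_F ≤ L₀ for all W and with ∇L M-Lipschitz (‖∇L(W) − ∇L(W′)‖_F ≤ M‖W − W′‖_F for all W, W′). Fix W_pt ∈ ℝ^{m×n} and γ_min, γ_max > 0. Let (A, B) and (Ã, B̃) in ℝ^{r×n} × ℝ^{m×r} satisfy γ_min·I ⪯ AAᵀ ⪯ γ_max·I, γ_min·I ⪯ BᵀB ⪯ γ_max·I, and the same bounds for Ã, B̃. Let G := ∇L(W_pt + BA), G̃ := ∇L(W_pt + B̃Ã), H := AAᵀ + BᵀB, H̃ := ÃÃᵀ + B̃ᵀB̃, and let X, X̃ be the unique solutions of H·X + X·H = (BᵀB)⁻¹BᵀGAᵀ + AGᵀB(BᵀB)⁻¹ and H̃·X̃ + X̃·H̃ = (B̃ᵀB̃)⁻¹B̃ᵀG̃Ãᵀ + ÃG̃ᵀB̃(B̃ᵀB̃)⁻¹, respectively. Then ‖X − X̃‖_F ≤ ( M·γ_max/(2·γ_min^{3/2}) + 3·L₀·γ_max^{3/2}/γ_min³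 ) · ( ‖A − Ã‖_F + ‖B − B̃‖_F ). -/
open Matrix

/-- Frobenius norm of a real matrix. -/
noncomputable def frobNorm {m n : ℕ} (A : Matrix (Fin m) (Fin n) ℝ) : ℝ :=
  Real.sqrt (∑ i, ∑ j, (A i j) ^ 2)

/-- Frobenius (trace) inner product of two real matrices. -/
def frobInner {m n : ℕ} (A B : Matrix (Fin m) (Fin n) ℝ) : ℝ :=
  ∑ i, ∑ j, A i j * B i j

/-!
Testing `HX + XH = C` against `X` gives `2c‖X‖² ≤ ⟨X, C⟩` when `H ⪰ c`, so the solution of a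
Sylvester equation is bounded by `‖C‖ / (2c)`. The difference `X - X̃` solves the equation for `H`
with right-hand side `C - C̃ - ((H - H̃)X̃ + X̃(H - H̃))`, and all factors of `H` and of
`C = S + Sᵀ`, `S = (BᵀB)⁻¹BᵀGAᵀ`, are Lipschitz in `(A, B)` because the spectral bounds give the
operator-norm bounds `‖A‖, ‖B‖ ≤ √γmax`, `‖(BᵀB)⁻¹‖ ≤ 1/γmin` and `‖(BᵀB)⁻¹Bᵀ‖ ≤ 1/√γmin`.
-/

attribute [local instance] Matrix.frobeniusNormedAddCommGroup

variable {m n p k : ℕ}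

lemma frobNorm_eq_norm (A : Matrix (Fin m) (Fin n) ℝ) : frobNorm A = ‖A‖ := by
  simp [frobNorm, Matrix.frobenius_norm_def, Real.sqrt_eq_rpow]

lemma frobInner_eq_trace (A B : Matrix (Fin m) (Fin n) ℝ) : frobInner A B = (Aᵀ * B).trace := by
  simp only [frobInner, Matrix.trace, Matrix.diag, Matrix.mul_apply, Matrix.transpose_apply]
  exact Finset.sum_comm

lemma frobInner_self (A : Matrix (Fin m) (Fin n) ℝ) : frobInner A A = ‖A‖ ^ 2 := by
  rw [← frobNorm_eq_norm, frobNorm, Real.sq_sqrt (by positivity)]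
  simp [frobInner, sq]

lemma frobInner_le_norm_mul_norm (A B : Matrix (Fin m) (Fin n) ℝ) :
    frobInner A B ≤ ‖A‖ * ‖B‖ := by
  simpa [frobInner, ← frobNorm_eq_norm, frobNorm, Fintype.sum_prod_type] using
    Real.sum_mul_le_sqrt_mul_sqrt Finset.univ (fun ij : Fin m × Fin n ↦ A ij.1 ij.2)
      (fun ij ↦ B ij.1 ij.2)

lemma frobInner_mul_left (N : Matrix (Fin p) (Fin m) ℝ) (X : Matrix (Fin m) (Fin n) ℝ)
    (Y : Matrix (Fin p) (Fin n) ℝ) : frobInner (N * X) Y = frobInner X (Nᵀ * Y) := by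
  simp only [frobInner_eq_trace, Matrix.transpose_mul, Matrix.mul_assoc]

lemma frobInner_add_right (X Y Z : Matrix (Fin m) (Fin n) ℝ) :
    frobInner X (Y + Z) = frobInner X Y + frobInner X Z := by
  simp only [frobInner_eq_trace, Matrix.mul_add, Matrix.trace_add]

lemma mul_sq_norm_le_frobInner_mul_left {G : Matrix (Fin m) (Fin m) ℝ} {c : ℝ}
    (hG : (G - c • 1).PosSemidef) (X : Matrix (Fin m) (Fin n) ℝ) :
    c * ‖X‖ ^ 2 ≤ frobInner X (G * X) := by
  have h := (hG.conjTranspose_mul_mul_same X).trace_nonneg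
  rw [Matrix.conjTranspose_eq_transpose_of_trivial, Matrix.mul_sub, Matrix.sub_mul,
    Matrix.trace_sub, Matrix.mul_smul, Matrix.smul_mul, Matrix.trace_smul, Matrix.mul_one] at h
  rw [← frobInner_self, frobInner_eq_trace, frobInner_eq_trace, ← Matrix.mul_assoc]
  simpa [sub_nonneg] using h

lemma mul_sq_norm_le_frobInner_mul_right {G : Matrix (Fin n) (Fin n) ℝ} {c : ℝ}
    (hG : (G - c • 1).PosSemidef) (X : Matrix (Fin m) (Fin n) ℝ) :
    c * ‖X‖ ^ 2 ≤ frobInner X (X * G) := by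
  have h := (hG.mul_mul_conjTranspose_same X).trace_nonneg
  rw [Matrix.conjTranspose_eq_transpose_of_trivial, Matrix.mul_sub, Matrix.sub_mul,
    Matrix.trace_sub, Matrix.mul_smul, Matrix.smul_mul, Matrix.trace_smul, Matrix.mul_one] at h
  rw [← frobInner_self, frobInner_eq_trace, frobInner_eq_trace, Matrix.trace_mul_comm,
    Matrix.trace_mul_comm Xᵀ]
  simpa [sub_nonneg] using h

lemma norm_le_div_of_coercive {Y Z : Matrix (Fin m) (Fin n) ℝ} {c : ℝ} (hc : 0 < c)
    (h : c * ‖Y‖ ^ 2 ≤ frobInner Y Z) : ‖Y‖ ≤ ‖Z‖ / c := by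
  rw [le_div_iff₀' hc]
  have := h.trans (frobInner_le_norm_mul_norm Y Z)
  nlinarith [norm_nonneg Y, norm_nonneg Z]

theorem norm_sylvester_solution_le {H X C : Matrix (Fin n) (Fin n) ℝ} {c : ℝ} (hc : 0 < c)
    (hH : (H - c • 1).PosSemidef) (hX : H * X + X * H = C) : ‖X‖ ≤ ‖C‖ / (2 * c) := by
  refine norm_le_div_of_coercive (by positivity) ?_
  rw [← hX, frobInner_add_right]
  linarith [mul_sq_norm_le_frobInner_mul_left hH X, mul_sq_norm_le_frobInner_mul_right hH X]

theorem norm_sylvester_sub_le {H H' X X' C C' : Matrix (Fin n) (Fin n) ℝ} {c : ℝ} (hc : 0 < c)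
    (hH : (H - c • 1).PosSemidef) (hX : H * X + X * H = C) (hX' : H' * X' + X' * H' = C') :
    ‖X - X'‖ ≤ (‖C - C'‖ + 2 * ‖H - H'‖ * ‖X'‖) / (2 * c) := by
  have hdiff : H * (X - X') + (X - X') * H = C - C' - ((H - H') * X' + X' * (H - H')) := by
    rw [← hX, ← hX']
    noncomm_ring
  refine (norm_sylvester_solution_le hc hH hdiff).trans ?_
  gcongr
  calc ‖C - C' - ((H - H') * X' + X' * (H - H'))‖
      ≤ ‖C - C'‖ + (‖(H - H') * X'‖ + ‖X' * (H - H')‖) :=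
        (norm_sub_le _ _).trans (add_le_add_right (norm_add_le _ _) _)
    _ ≤ ‖C - C'‖ + 2 * ‖H - H'‖ * ‖X'‖ := by
        linarith [frobenius_norm_mul (H - H') X', frobenius_norm_mul X' (H - H')]

theorem norm_sylvester_symm_sub_le {H H' X X' S S' : Matrix (Fin n) (Fin n) ℝ} {c : ℝ}
    (hc : 0 < c) (hH : (H - c • 1).PosSemidef) (hH' : (H' - c • 1).PosSemidef)
    (hX : H * X + X * H = S + Sᵀ) (hX' : H' * X' + X' * H' = S' + S'ᵀ) :
    ‖X - X'‖ ≤ (‖S - S'‖ + ‖H - H'‖ * ‖S'‖ / c) / c := by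
  have hS : ‖S + Sᵀ - (S' + S'ᵀ)‖ ≤ 2 * ‖S - S'‖ := by
    rw [add_sub_add_comm, ← transpose_sub, two_mul]
    exact (norm_add_le _ _).trans_eq (by rw [frobenius_norm_transpose])
  have hX'S : ‖X'‖ ≤ ‖S'‖ / c := by
    refine (norm_sylvester_solution_le hc hH' hX').trans ?_
    calc ‖S' + S'ᵀ‖ / (2 * c) ≤ (‖S'‖ + ‖S'ᵀ‖) / (2 * c) := by gcongr; exact norm_add_le _ _
      _ = ‖S'‖ / c := by rw [frobenius_norm_transpose]; field_simp; ring
  calc ‖X - X'‖ ≤ (‖S + Sᵀ - (S' + S'ᵀ)‖ + 2 * ‖H - H'‖ * ‖X'‖) / (2 * c) :=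
        norm_sylvester_sub_le hc hH hX hX'
    _ ≤ (2 * ‖S - S'‖ + 2 * ‖H - H'‖ * (‖S'‖ / c)) / (2 * c) := by gcongr
    _ = (‖S - S'‖ + ‖H - H'‖ * ‖S'‖ / c) / c := by field_simp

/-- The operator norm of `N` is at most `κ`, phrased through the Frobenius norm: left
multiplication by `N` is a `κ`-bounded map on matrices with any number of columns. -/
def OpNormLE (N : Matrix (Fin p) (Fin m) ℝ) (κ : ℝ) : Prop :=
  ∀ ⦃k : ℕ⦄ (X : Matrix (Fin m) (Fin k) ℝ), ‖N * X‖ ≤ κ * ‖X‖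

namespace OpNormLE

variable {N : Matrix (Fin p) (Fin m) ℝ} {κ : ℝ}

lemma mul_transpose_le (h : OpNormLE N κ) (X : Matrix (Fin k) (Fin m) ℝ) :
    ‖X * Nᵀ‖ ≤ κ * ‖X‖ := by
  rw [← frobenius_norm_transpose, transpose_mul, transpose_transpose, ← frobenius_norm_transpose X]
  exact h Xᵀ

lemma transpose (h : OpNormLE N κ) (hκ : 0 ≤ κ) : OpNormLE Nᵀ κ := by
  intro k Y
  have hsq : ‖Nᵀ * Y‖ ^ 2 ≤ κ * ‖Y‖ * ‖Nᵀ * Y‖ := by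
    calc ‖Nᵀ * Y‖ ^ 2 = frobInner Y (N * (Nᵀ * Y)) := by
          rw [← frobInner_self, frobInner_mul_left, transpose_transpose]
      _ ≤ ‖Y‖ * ‖N * (Nᵀ * Y)‖ := frobInner_le_norm_mul_norm _ _
      _ ≤ ‖Y‖ * (κ * ‖Nᵀ * Y‖) := by gcongr; exact h _
      _ = κ * ‖Y‖ * ‖Nᵀ * Y‖ := by ring
  nlinarith [norm_nonneg (Nᵀ * Y), mul_nonneg hκ (norm_nonneg Y)]

end OpNormLE

lemma opNormLE_sqrt_of_gram_le {N : Matrix (Fin p) (Fin m) ℝ} {c : ℝ}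
    (hN : (c • 1 - Nᵀ * N).PosSemidef) : OpNormLE N √c := by
  intro k X
  have hsq : ‖N * X‖ ^ 2 ≤ c * ‖X‖ ^ 2 := by
    have hN' : (-(Nᵀ * N) - (-c) • (1 : Matrix (Fin m) (Fin m) ℝ)).PosSemidef := by
      rwa [neg_smul, sub_neg_eq_add, neg_add_eq_sub]
    have := mul_sq_norm_le_frobInner_mul_left hN' X
    rw [← frobInner_self, frobInner_mul_left, ← Matrix.mul_assoc]
    simpa [frobInner_eq_trace, Matrix.mul_neg] using this
  rw [← abs_norm (N * X)]
  simpa [Real.sqrt_mul', Real.sqrt_sq (norm_nonneg X)] using Real.abs_le_sqrt hsq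

section Coercive

variable {G : Matrix (Fin n) (Fin n) ℝ} {γ : ℝ}

lemma isUnit_of_coercive (hγ : 0 < γ) (hG : (G - γ • 1).PosSemidef) : IsUnit G := by
  simpa using ((PosDef.one.smul hγ).add_posSemidef hG).isUnit

lemma isUnit_det_of_coercive (hγ : 0 < γ) (hG : (G - γ • 1).PosSemidef) : IsUnit G.det :=
  (isUnit_iff_isUnit_det G).mp (isUnit_of_coercive hγ hG)

lemma opNormLE_inv_of_coercive (hγ : 0 < γ) (hG : (G - γ • 1).PosSemidef) :
    OpNormLE G⁻¹ γ⁻¹ := by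
  intro k X
  rw [inv_mul_eq_div]
  refine norm_le_div_of_coercive hγ ?_
  simpa only [mul_nonsing_inv_cancel_left _ _ (isUnit_det_of_coercive hγ hG)] using
    mul_sq_norm_le_frobInner_mul_left hG (G⁻¹ * X)

end Coercive

lemma gram_inv_transpose (B : Matrix (Fin m) (Fin n) ℝ) : ((Bᵀ * B)⁻¹)ᵀ = (Bᵀ * B)⁻¹ := by
  rw [transpose_nonsing_inv, transpose_mul, transpose_transpose]

lemma pinv_eq_transpose (B : Matrix (Fin m) (Fin n) ℝ) :
    (Bᵀ * B)⁻¹ * Bᵀ = (B * (Bᵀ * B)⁻¹)ᵀ := by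
  rw [transpose_mul, gram_inv_transpose]

section Gram

variable {B : Matrix (Fin m) (Fin n) ℝ} {γ : ℝ}

lemma opNormLE_mul_gram_inv (hγ : 0 < γ) (hB : (Bᵀ * B - γ • 1).PosSemidef) :
    OpNormLE (B * (Bᵀ * B)⁻¹) (√γ)⁻¹ := by
  intro k Y
  have hsq : ‖B * (Bᵀ * B)⁻¹ * Y‖ ^ 2 ≤ γ⁻¹ * ‖Y‖ ^ 2 := by
    calc ‖B * (Bᵀ * B)⁻¹ * Y‖ ^ 2 = frobInner ((Bᵀ * B)⁻¹ * Y) Y := by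
          rw [← frobInner_self, Matrix.mul_assoc, frobInner_mul_left, ← Matrix.mul_assoc,
            mul_nonsing_inv_cancel_left _ _ (isUnit_det_of_coercive hγ hB)]
      _ ≤ ‖(Bᵀ * B)⁻¹ * Y‖ * ‖Y‖ := frobInner_le_norm_mul_norm _ _
      _ ≤ γ⁻¹ * ‖Y‖ * ‖Y‖ := by gcongr; exact opNormLE_inv_of_coercive hγ hB Y
      _ = γ⁻¹ * ‖Y‖ ^ 2 := by ring
  rw [← abs_norm (B * (Bᵀ * B)⁻¹ * Y), ← Real.sqrt_inv]
  simpa [Real.sqrt_mul', Real.sqrt_sq (norm_nonneg Y)] using Real.abs_le_sqrt hsq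

lemma opNormLE_pinv (hγ : 0 < γ) (hB : (Bᵀ * B - γ • 1).PosSemidef) :
    OpNormLE ((Bᵀ * B)⁻¹ * Bᵀ) (√γ)⁻¹ := by
  rw [pinv_eq_transpose]
  exact (opNormLE_mul_gram_inv hγ hB).transpose (by positivity)

end Gram

lemma norm_transpose_mul_self_sub_le {N N' : Matrix (Fin p) (Fin m) ℝ} {κ : ℝ} (hκ : 0 ≤ κ)
    (hN : OpNormLE N κ) (hN' : OpNormLE N' κ) :
    ‖Nᵀ * N - N'ᵀ * N'‖ ≤ 2 * κ * ‖N - N'‖ := by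
  have hsplit : Nᵀ * N - N'ᵀ * N' = Nᵀ * (N - N') + (N'ᵀ * (N - N'))ᵀ := by
    rw [transpose_mul, transpose_sub, transpose_transpose, Matrix.mul_sub, Matrix.sub_mul]
    abel
  rw [hsplit]
  calc ‖Nᵀ * (N - N') + (N'ᵀ * (N - N'))ᵀ‖ ≤ ‖Nᵀ * (N - N')‖ + ‖N'ᵀ * (N - N')‖ :=
        (norm_add_le _ _).trans_eq (by rw [frobenius_norm_transpose])
    _ ≤ κ * ‖N - N'‖ + κ * ‖N - N'‖ := add_le_add (hN.transpose hκ _) (hN'.transpose hκ _)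
    _ = 2 * κ * ‖N - N'‖ := by ring

variable {r : ℕ}

structure WellConditioned (γmin γmax : ℝ) (A : Matrix (Fin r) (Fin n) ℝ)
    (B : Matrix (Fin m) (Fin r) ℝ) : Prop where
  gram_A_ge : (A * Aᵀ - γmin • (1 : Matrix (Fin r) (Fin r) ℝ)).PosSemidef
  gram_A_le : (γmax • (1 : Matrix (Fin r) (Fin r) ℝ) - A * Aᵀ).PosSemidef
  gram_B_ge : (Bᵀ * B - γmin • (1 : Matrix (Fin r) (Fin r) ℝ)).PosSemidef
  gram_B_le : (γmax • (1 : Matrix (Fin r) (Fin r) ℝ) - Bᵀ * B).PosSemidef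

namespace WellConditioned

variable {γmin γmax : ℝ} {A A' : Matrix (Fin r) (Fin n) ℝ} {B B' : Matrix (Fin m) (Fin r) ℝ}
  (h : WellConditioned γmin γmax A B) (h' : WellConditioned γmin γmax A' B')

include h

lemma γmin_le_γmax [Nonempty (Fin r)] : γmin ≤ γmax := by
  have hsum := h.gram_A_ge.add h.gram_A_le
  rw [sub_add_sub_cancel', ← sub_smul] at hsum
  simpa using hsum.diag_nonneg (i := Classical.arbitrary (Fin r))

lemma coercive : (A * Aᵀ + Bᵀ * B - (2 * γmin) • 1).PosSemidef := by
  convert h.gram_A_ge.add h.gram_B_ge using 1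
  rw [two_mul, add_smul]
  abel

lemma opNormLE_transpose_A : OpNormLE Aᵀ √γmax :=
  opNormLE_sqrt_of_gram_le (by simpa using h.gram_A_le)

lemma opNormLE_A : OpNormLE A √γmax := by
  have := h.opNormLE_transpose_A.transpose (Real.sqrt_nonneg _)
  rwa [transpose_transpose] at this

lemma opNormLE_B : OpNormLE B √γmax :=
  opNormLE_sqrt_of_gram_le h.gram_B_le

lemma norm_pinv_mul_mul_le (hγ : 0 < γmin) (G : Matrix (Fin m) (Fin n) ℝ) :
    ‖(Bᵀ * B)⁻¹ * Bᵀ * G * Aᵀ‖ ≤ √γmax * ((√γmin)⁻¹ * ‖G‖) :=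
  (h.opNormLE_A.mul_transpose_le _).trans (by gcongr; exact opNormLE_pinv hγ h.gram_B_ge G)

lemma nonempty_cols [Nonempty (Fin r)] (hγ : 0 < γmin) : Nonempty (Fin n) := by
  by_contra hn
  have := h.gram_A_ge.diag_nonneg (i := Classical.arbitrary (Fin r))
  simp [not_nonempty_iff.mp hn, mul_apply] at this
  linarith

lemma nonempty_rows [Nonempty (Fin r)] (hγ : 0 < γmin) : Nonempty (Fin m) := by
  by_contra hm
  have := h.gram_B_ge.diag_nonneg (i := Classical.arbitrary (Fin r))
  simp [not_nonempty_iff.mp hm, mul_apply] at this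
  linarith

include h'

lemma norm_mul_sub_le : ‖B * A - B' * A'‖ ≤ √γmax * (‖A - A'‖ + ‖B - B'‖) := by
  have hsplit : B * A - B' * A' = B * (A - A') + (B - B') * A'ᵀᵀ := by
    rw [transpose_transpose, Matrix.mul_sub, Matrix.sub_mul]
    abel
  rw [hsplit, mul_add]
  exact (norm_add_le _ _).trans
    (add_le_add (h.opNormLE_B _) (h'.opNormLE_transpose_A.mul_transpose_le _))

lemma norm_gram_add_gram_sub_le :
    ‖A * Aᵀ + Bᵀ * B - (A' * A'ᵀ + B'ᵀ * B')‖ ≤ 2 * √γmax * (‖A - A'‖ + ‖B - B'‖) := by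
  have hA := norm_transpose_mul_self_sub_le (Real.sqrt_nonneg γmax)
    h.opNormLE_transpose_A h'.opNormLE_transpose_A
  have hB := norm_transpose_mul_self_sub_le (Real.sqrt_nonneg γmax) h.opNormLE_B h'.opNormLE_B
  rw [transpose_transpose, transpose_transpose, ← transpose_sub, frobenius_norm_transpose] at hA
  rw [add_sub_add_comm, mul_add]
  exact (norm_add_le _ _).trans (add_le_add hA hB)

lemma norm_pinv_sub_le (hγ : 0 < γmin) :
    ‖(Bᵀ * B)⁻¹ * Bᵀ - (B'ᵀ * B')⁻¹ * B'ᵀ‖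
      ≤ γmin⁻¹ * (1 + 2 * √γmax * (√γmin)⁻¹) * ‖B - B'‖ := by
  have hunits :=
    iff_of_true (isUnit_of_coercive hγ h.gram_B_ge) (isUnit_of_coercive hγ h'.gram_B_ge)
  have hsplit : (Bᵀ * B)⁻¹ * Bᵀ - (B'ᵀ * B')⁻¹ * B'ᵀ
      = (Bᵀ * B)⁻¹ * (B - B')ᵀ + (Bᵀ * B)⁻¹ * ((B'ᵀ * B' - Bᵀ * B) * (B' * (B'ᵀ * B')⁻¹)ᵀ) := by
    rw [← pinv_eq_transpose, ← Matrix.mul_assoc, ← Matrix.mul_assoc, ← inv_sub_inv hunits,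
      transpose_sub, Matrix.mul_sub, Matrix.sub_mul]
    abel
  have hP := opNormLE_inv_of_coercive hγ h.gram_B_ge
  have hgram : ‖B'ᵀ * B' - Bᵀ * B‖ ≤ 2 * √γmax * ‖B - B'‖ := by
    rw [norm_sub_rev]
    exact norm_transpose_mul_self_sub_le (Real.sqrt_nonneg γmax) h.opNormLE_B h'.opNormLE_B
  rw [hsplit]
  calc _ ≤ γmin⁻¹ * ‖(B - B')ᵀ‖ + γmin⁻¹ * ‖(B'ᵀ * B' - Bᵀ * B) * (B' * (B'ᵀ * B')⁻¹)ᵀ‖ :=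
        (norm_add_le _ _).trans (add_le_add (hP _) (hP _))
    _ ≤ γmin⁻¹ * ‖B - B'‖ + γmin⁻¹ * ((√γmin)⁻¹ * (2 * √γmax * ‖B - B'‖)) := by
        rw [frobenius_norm_transpose]
        gcongr
        exact ((opNormLE_mul_gram_inv hγ h'.gram_B_ge).mul_transpose_le _).trans
          (by gcongr)
    _ = _ := by ring

lemma norm_pinv_mul_mul_sub_le (hγ : 0 < γmin) {G G' : Matrix (Fin m) (Fin n) ℝ} {L K : ℝ}
    (hG : ‖G‖ ≤ L) (hG' : ‖G'‖ ≤ L) (hGG' : ‖G - G'‖ ≤ K) :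
    ‖(Bᵀ * B)⁻¹ * Bᵀ * G * Aᵀ - (B'ᵀ * B')⁻¹ * B'ᵀ * G' * A'ᵀ‖
      ≤ √γmax * (γmin⁻¹ * (1 + 2 * √γmax * (√γmin)⁻¹) * ‖B - B'‖ * L)
        + √γmax * ((√γmin)⁻¹ * K) + (√γmin)⁻¹ * (L * ‖A - A'‖) := by
  have hsplit : (Bᵀ * B)⁻¹ * Bᵀ * G * Aᵀ - (B'ᵀ * B')⁻¹ * B'ᵀ * G' * A'ᵀ
      = ((Bᵀ * B)⁻¹ * Bᵀ - (B'ᵀ * B')⁻¹ * B'ᵀ) * G * Aᵀ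
        + (B'ᵀ * B')⁻¹ * B'ᵀ * (G - G') * Aᵀ + (B'ᵀ * B')⁻¹ * B'ᵀ * (G' * (A - A')ᵀ) := by
    simp only [transpose_sub, Matrix.mul_sub, Matrix.sub_mul, Matrix.mul_assoc]
    abel
  have hpinv' := opNormLE_pinv hγ h'.gram_B_ge
  rw [hsplit]
  refine (norm_add₃_le).trans (add_le_add_three ?_ ?_ ?_)
  · refine (h.opNormLE_A.mul_transpose_le _).trans ?_
    gcongr
    exact (frobenius_norm_mul _ _).trans (by gcongr; exact h.norm_pinv_sub_le h' hγ)
  · exact (h.opNormLE_A.mul_transpose_le _).trans (by gcongr; exact (hpinv' _).trans (by gcongr))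
  · refine (hpinv' _).trans ?_
    gcongr
    exact (frobenius_norm_mul _ _).trans (by rw [frobenius_norm_transpose]; gcongr)

end WellConditioned

lemma nonneg_of_forall_norm_sub_le {E F : Type*} [NormedAddCommGroup E] [Nontrivial E]
    [SeminormedAddCommGroup F] {f : E → F} {M : ℝ} (hf : ∀ x y, ‖f x - f y‖ ≤ M * ‖x - y‖) :
    0 ≤ M := by
  obtain ⟨x, hx⟩ := exists_ne (0 : E)
  have := (norm_nonneg _).trans (hf x 0)
  rw [sub_zero] at this
  exact nonneg_of_mul_nonneg_left this (norm_pos_iff.mpr hx)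

lemma pinv_mul_mul_transpose (A : Matrix (Fin r) (Fin n) ℝ) (B : Matrix (Fin m) (Fin r) ℝ)
    (G : Matrix (Fin m) (Fin n) ℝ) :
    ((Bᵀ * B)⁻¹ * Bᵀ * G * Aᵀ)ᵀ = A * Gᵀ * B * (Bᵀ * B)⁻¹ := by
  simp only [transpose_mul, transpose_transpose, gram_inv_transpose, Matrix.mul_assoc]

lemma rpow_three_halves {x : ℝ} (hx : 0 ≤ x) : x ^ ((3 : ℝ) / 2) = √x ^ 3 := by
  rw [Real.sqrt_eq_rpow, ← Real.rpow_natCast, ← Real.rpow_mul hx]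
  norm_num

lemma sylvester_lipschitz_constant_le {γmin γmax a b L M : ℝ} (hγ : 0 < γmin) (hle : γmin ≤ γmax)
    (ha : 0 ≤ a) (hb : 0 ≤ b) (hL : 0 ≤ L) :
    (√γmax * (γmin⁻¹ * (1 + 2 * √γmax * (√γmin)⁻¹) * b * L)
        + √γmax * ((√γmin)⁻¹ * (M * (√γmax * (a + b)))) + (√γmin)⁻¹ * (L * a)
        + 2 * √γmax * (a + b) * (√γmax * ((√γmin)⁻¹ * L)) / (2 * γmin)) / (2 * γmin)
      ≤ (M * γmax / (2 * γmin ^ ((3 : ℝ) / 2)) + 3 * L * γmax ^ ((3 : ℝ) / 2) / γmin ^ 3)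
        * (a + b) := by
  rw [rpow_three_halves hγ.le, rpow_three_halves (hγ.le.trans hle)]
  obtain ⟨q, hq, rfl⟩ : ∃ q, 0 < q ∧ q ^ 2 = γmin := ⟨√γmin, by positivity, Real.sq_sqrt hγ.le⟩
  obtain ⟨s, hs, rfl⟩ : ∃ s, 0 ≤ s ∧ s ^ 2 = γmax :=
    ⟨√γmax, Real.sqrt_nonneg _, Real.sq_sqrt (hγ.le.trans hle)⟩
  rw [Real.sqrt_sq hq.le, Real.sqrt_sq hs]
  have hqs : q ≤ s := (pow_le_pow_iff_left₀ hq.le hs two_ne_zero).mp hle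
  have h1 : q * s ^ 2 ≤ s ^ 3 := by nlinarith [sq_nonneg s]
  have h2 : q ^ 2 * s ≤ s ^ 3 := by nlinarith [mul_le_mul hqs hqs hq.le hs]
  have h3 : q ^ 3 ≤ s ^ 3 := pow_le_pow_left₀ hq.le hqs 3
  have hLa := mul_nonneg hL ha
  have hLb := mul_nonneg hL hb
  rw [div_le_iff₀ (by positivity)]
  field_simp
  linear_combination mul_le_mul_of_nonneg_left h1 hLa + mul_le_mul_of_nonneg_left h3 hLa
    + 3 * mul_le_mul_of_nonneg_left h1 hLb + mul_le_mul_of_nonneg_left h2 hLb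
    + 4 * mul_nonneg hLa (pow_nonneg hs 3) + 2 * mul_nonneg hLb (pow_nonneg hs 3)

theorem sylvester_solution_lipschitz_general {m n r : ℕ}
    (gradL : Matrix (Fin m) (Fin n) ℝ → Matrix (Fin m) (Fin n) ℝ)
    (L₀ M : ℝ)
    (hbound : ∀ W, frobNorm (gradL W) ≤ L₀)
    (hlip : ∀ W W' : Matrix (Fin m) (Fin n) ℝ,
      frobNorm (gradL W - gradL W') ≤ M * frobNorm (W - W'))
    (Wpt : Matrix (Fin m) (Fin n) ℝ)
    (γmin γmax : ℝ) (hγmin : 0 < γmin)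
    (A At : Matrix (Fin r) (Fin n) ℝ) (B Bt : Matrix (Fin m) (Fin r) ℝ)
    (hA1 : (A * Aᵀ - γmin • (1 : Matrix (Fin r) (Fin r) ℝ)).PosSemidef)
    (hA2 : (γmax • (1 : Matrix (Fin r) (Fin r) ℝ) - A * Aᵀ).PosSemidef)
    (hB1 : (Bᵀ * B - γmin • (1 : Matrix (Fin r) (Fin r) ℝ)).PosSemidef)
    (hB2 : (γmax • (1 : Matrix (Fin r) (Fin r) ℝ) - Bᵀ * B).PosSemidef)
    (hA1t : (At * Atᵀ - γmin • (1 : Matrix (Fin r) (Fin r) ℝ)).PosSemidef)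
    (hA2t : (γmax • (1 : Matrix (Fin r) (Fin r) ℝ) - At * Atᵀ).PosSemidef)
    (hB1t : (Btᵀ * Bt - γmin • (1 : Matrix (Fin r) (Fin r) ℝ)).PosSemidef)
    (hB2t : (γmax • (1 : Matrix (Fin r) (Fin r) ℝ) - Btᵀ * Bt).PosSemidef)
    (X Xt : Matrix (Fin r) (Fin r) ℝ)
    (hX : (A * Aᵀ + Bᵀ * B) * X + X * (A * Aᵀ + Bᵀ * B)
        = (Bᵀ * B)⁻¹ * Bᵀ * gradL (Wpt + B * A) * Aᵀ
          + A * (gradL (Wpt + B * A))ᵀ * B * (Bᵀ * B)⁻¹)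
    (hXt : (At * Atᵀ + Btᵀ * Bt) * Xt + Xt * (At * Atᵀ + Btᵀ * Bt)
        = (Btᵀ * Bt)⁻¹ * Btᵀ * gradL (Wpt + Bt * At) * Atᵀ
          + At * (gradL (Wpt + Bt * At))ᵀ * Bt * (Btᵀ * Bt)⁻¹) :
    frobNorm (X - Xt)
      ≤ (M * γmax / (2 * γmin ^ ((3:ℝ)/2)) + 3 * L₀ * γmax ^ ((3:ℝ)/2) / γmin ^ 3)
        * (frobNorm (A - At) + frobNorm (B - Bt)) := by
  rcases Nat.eq_zero_or_pos r with rfl | hr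
  · simp [frobNorm]
  have : Nonempty (Fin r) := Fin.pos_iff_nonempty.mp hr
  have h : WellConditioned γmin γmax A B := ⟨hA1, hA2, hB1, hB2⟩
  have ht : WellConditioned γmin γmax At Bt := ⟨hA1t, hA2t, hB1t, hB2t⟩
  simp only [frobNorm_eq_norm] at hbound hlip ⊢
  rw [← pinv_mul_mul_transpose] at hX hXt
  have hM : 0 ≤ M := by
    have : Nonempty (Fin m) := h.nonempty_rows hγmin
    have : Nonempty (Fin n) := h.nonempty_cols hγmin
    exact nonneg_of_forall_norm_sub_le hlip
  have hG : ‖gradL (Wpt + B * A) - gradL (Wpt + Bt * At)‖ ≤ M * (√γmax * (‖A - At‖ + ‖B - Bt‖)) :=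
    (hlip _ _).trans (by rw [add_sub_add_left_eq_sub]; gcongr; exact h.norm_mul_sub_le ht)
  calc ‖X - Xt‖
      ≤ (‖(Bᵀ * B)⁻¹ * Bᵀ * gradL (Wpt + B * A) * Aᵀ
              - (Btᵀ * Bt)⁻¹ * Btᵀ * gradL (Wpt + Bt * At) * Atᵀ‖
          + ‖A * Aᵀ + Bᵀ * B - (At * Atᵀ + Btᵀ * Bt)‖
            * ‖(Btᵀ * Bt)⁻¹ * Btᵀ * gradL (Wpt + Bt * At) * Atᵀ‖ / (2 * γmin)) / (2 * γmin) :=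
        norm_sylvester_symm_sub_le (by positivity) h.coercive ht.coercive hX hXt
    _ ≤ (√γmax * (γmin⁻¹ * (1 + 2 * √γmax * (√γmin)⁻¹) * ‖B - Bt‖ * L₀)
          + √γmax * ((√γmin)⁻¹ * (M * (√γmax * (‖A - At‖ + ‖B - Bt‖))))
          + (√γmin)⁻¹ * (L₀ * ‖A - At‖)
          + 2 * √γmax * (‖A - At‖ + ‖B - Bt‖) * (√γmax * ((√γmin)⁻¹ * L₀)) / (2 * γmin))
          / (2 * γmin) := by
        gcongr
        · exact h.norm_pinv_mul_mul_sub_le ht hγmin (hbound _) (hbound _) hG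
        · exact h.norm_gram_add_gram_sub_le ht
        · exact (ht.norm_pinv_mul_mul_le hγmin _).trans (by gcongr; exact hbound _)
    _ ≤ _ := sylvester_lipschitz_constant_le hγmin h.γmin_le_γmax (norm_nonneg _) (norm_nonneg _)
          ((norm_nonneg _).trans (hbound 0))

/-- Lipschitz continuity of the solution of the ODELoRA Sylvester equation
with respect to the LoRA factors `(A, B)`. -/
theorem sylvester_solution_lipschitz {m n r : ℕ}
    (L : Matrix (Fin m) (Fin n) ℝ → ℝ)
    (gradL : Matrix (Fin m) (Fin n) ℝ → Matrix (Fin m) (Fin n) ℝ)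
    -- `gradL` is the gradient of the differentiable function `L`
    (hgrad : ∀ (W Δ : Matrix (Fin m) (Fin n) ℝ),
      HasDerivAt (fun t : ℝ => L (W + t • Δ)) (frobInner (gradL W) Δ) 0)
    (L₀ M : ℝ)
    (hbound : ∀ W, frobNorm (gradL W) ≤ L₀)
    (hlip : ∀ W W' : Matrix (Fin m) (Fin n) ℝ,
      frobNorm (gradL W - gradL W') ≤ M * frobNorm (W - W'))
    (Wpt : Matrix (Fin m) (Fin n) ℝ)
    (γmin γmax : ℝ) (hγmin : 0 < γmin) (hγmax : 0 < γmax)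
    (A At : Matrix (Fin r) (Fin n) ℝ) (B Bt : Matrix (Fin m) (Fin r) ℝ)
    (hA1 : (A * Aᵀ - γmin • (1 : Matrix (Fin r) (Fin r) ℝ)).PosSemidef)
    (hA2 : (γmax • (1 : Matrix (Fin r) (Fin r) ℝ) - A * Aᵀ).PosSemidef)
    (hB1 : (Bᵀ * B - γmin • (1 : Matrix (Fin r) (Fin r) ℝ)).PosSemidef)
    (hB2 : (γmax • (1 : Matrix (Fin r) (Fin r) ℝ) - Bᵀ * B).PosSemidef)
    (hA1t : (At * Atᵀ - γmin • (1 : Matrix (Fin r) (Fin r) ℝ)).PosSemidef)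
    (hA2t : (γmax • (1 : Matrix (Fin r) (Fin r) ℝ) - At * Atᵀ).PosSemidef)
    (hB1t : (Btᵀ * Bt - γmin • (1 : Matrix (Fin r) (Fin r) ℝ)).PosSemidef)
    (hB2t : (γmax • (1 : Matrix (Fin r) (Fin r) ℝ) - Btᵀ * Bt).PosSemidef)
    (X Xt : Matrix (Fin r) (Fin r) ℝ)
    (hX : (A * Aᵀ + Bᵀ * B) * X + X * (A * Aᵀ + Bᵀ * B)
        = (Bᵀ * B)⁻¹ * Bᵀ * gradL (Wpt + B * A) * Aᵀ
          + A * (gradL (Wpt + B * A))ᵀ * B * (Bᵀ * B)⁻¹)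
    (hXt : (At * Atᵀ + Btᵀ * Bt) * Xt + Xt * (At * Atᵀ + Btᵀ * Bt)
        = (Btᵀ * Bt)⁻¹ * Btᵀ * gradL (Wpt + Bt * At) * Atᵀ
          + At * (gradL (Wpt + Bt * At))ᵀ * Bt * (Btᵀ * Bt)⁻¹) :
    frobNorm (X - Xt)
      ≤ (M * γmax / (2 * γmin ^ ((3:ℝ)/2)) + 3 * L₀ * γmax ^ ((3:ℝ)/2) / γmin ^ 3)
        * (frobNorm (A - At) + frobNorm (B - Bt)) :=
  sylvester_solution_lipschitz_general gradL L₀ M hbound hlip Wpt γmin γmax hγmin A At B Bt hA1 hA2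
    hB1 hB2 hA1t hA2t hB1t hB2t X Xt hX hXt
end

section
/- Let A, A* ∈ ℝ^{r×n} and B, B* ∈ ℝ^{m×r}, where A has full row rank r (so AAᵀ is invertible) and B* has full column rank r (so σ_min(B*) > 0). Then ‖A*·P_A^null‖_F ≤ (1/σ_min(B*)) · ‖B·A − B*·A*‖_F, where P_A^null := I_n − Aᵀ(AAᵀ)⁻¹A. -/
open Matrix

/-- Euclidean norm of a real vector. -/
noncomputable def vecNorm {b : ℕ} (x : Fin b → ℝ) : ℝ :=
  Real.sqrt (∑ i, x i ^ 2)

/-- Smallest singular value of a real matrix: the infimum of `‖M x‖` over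
unit vectors `x`. -/
noncomputable def sigmaMin {a b : ℕ} (M : Matrix (Fin a) (Fin b) ℝ) : ℝ :=
  sInf {c : ℝ | ∃ x : Fin b → ℝ, vecNorm x = 1 ∧ c = vecNorm (M.mulVec x)}

/-! Write `P = P_A^null` and `E = B A - B* A*`. Since `A P = 0`, we have `E P = -B* (A* P)`.
Right multiplication by the orthogonal projection `P` does not increase the Frobenius norm, and
`B*` stretches every column of `A* P` by at least `σ_min(B*)`, which is positive because `B*` is
injective on a finite-dimensional space. Hence `σ_min(B*) ‖A* P‖_F ≤ ‖E P‖_F ≤ ‖E‖_F`. -/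

lemma Matrix.mulVec_injective_of_rank_eq_card {m n K : Type*} [Fintype n] [Field K]
    {M : Matrix m n K} (h : M.rank = Fintype.card n) : Function.Injective M.mulVec := by
  rw [Matrix.mulVec_injective_iff, linearIndependent_iff_card_eq_finrank_span, Set.finrank,
    ← Matrix.rank_eq_finrank_span_cols, h]

lemma Matrix.isUnit_mul_transpose_of_rank_eq_card {m n K : Type*} [Fintype m] [Fintype n]
    [DecidableEq m] [Field K] [LinearOrder K] [IsStrictOrderedRing K] {A : Matrix m n K}
    (hA : A.rank = Fintype.card m) : IsUnit (A * Aᵀ) := by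
  rw [← Matrix.mulVec_injective_iff_isUnit]
  exact Matrix.mulVec_injective_of_rank_eq_card (by rw [Matrix.rank_self_mul_transpose, hA])

lemma IsStarProjection.transpose_eq {n R : Type*} [Fintype n] [CommSemiring R] [StarRing R]
    [TrivialStar R] {P : Matrix n n R} (hP : IsStarProjection P) : Pᵀ = P := by
  simpa [Matrix.star_eq_conjTranspose] using hP.isSelfAdjoint.star_eq

lemma IsStarProjection.mul_mul_transpose {m n R : Type*} [Fintype n] [CommSemiring R]
    [StarRing R] [TrivialStar R] {P : Matrix n n R} (hP : IsStarProjection P) (E : Matrix m n R) :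
    E * P * (E * P)ᵀ = E * P * Eᵀ := by
  rw [Matrix.transpose_mul, hP.transpose_eq, Matrix.mul_assoc, ← Matrix.mul_assoc P,
    hP.isIdempotentElem.eq, Matrix.mul_assoc]

section nullProj

variable {m n : Type*} [Fintype m] [Fintype n] [DecidableEq m] [DecidableEq n]

/-- `P_A^null`. When `A * Aᵀ` is singular, `(A * Aᵀ)⁻¹ = 0` and this is `1`. -/
noncomputable def nullProj (A : Matrix m n ℝ) : Matrix n n ℝ :=
  1 - Aᵀ * (A * Aᵀ)⁻¹ * A

lemma mul_nullProj {A : Matrix m n ℝ} (hA : IsUnit (A * Aᵀ)) : A * nullProj A = 0 := by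
  rw [nullProj, Matrix.mul_sub, Matrix.mul_one, ← Matrix.mul_assoc, ← Matrix.mul_assoc,
    Matrix.mul_nonsing_inv _ ((Matrix.isUnit_iff_isUnit_det _).mp hA), Matrix.one_mul, sub_self]

lemma isStarProjection_nullProj {A : Matrix m n ℝ} (hA : IsUnit (A * Aᵀ)) :
    IsStarProjection (nullProj A) := by
  have hdet := (Matrix.isUnit_iff_isUnit_det _).mp hA
  refine IsStarProjection.one_sub ⟨?_, ?_⟩
  · show _ * _ = _
    rw [Matrix.mul_assoc, Matrix.mul_assoc, ← Matrix.mul_assoc A, ← Matrix.mul_assoc A,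
      Matrix.mul_nonsing_inv _ hdet, Matrix.one_mul, Matrix.mul_assoc]
  · simp [IsSelfAdjoint, Matrix.star_eq_conjTranspose, Matrix.transpose_nonsing_inv,
      Matrix.mul_assoc]

end nullProj

lemma vecNorm_eq_norm {b : ℕ} (x : Fin b → ℝ) :
    vecNorm x = ‖(WithLp.toLp 2 x : EuclideanSpace ℝ (Fin b))‖ := by
  simp [vecNorm, EuclideanSpace.norm_eq]

lemma vecNorm_smul {b : ℕ} (c : ℝ) (x : Fin b → ℝ) : vecNorm (c • x) = |c| * vecNorm x := by
  rw [vecNorm_eq_norm, WithLp.toLp_smul, norm_smul, Real.norm_eq_abs, ← vecNorm_eq_norm]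

lemma sigmaMin_nonneg {a b : ℕ} (M : Matrix (Fin a) (Fin b) ℝ) : 0 ≤ sigmaMin M :=
  Real.sInf_nonneg (by rintro c ⟨x, -, rfl⟩; exact Real.sqrt_nonneg _)

lemma sigmaMin_mul_vecNorm_le {a b : ℕ} (M : Matrix (Fin a) (Fin b) ℝ) (x : Fin b → ℝ) :
    sigmaMin M * vecNorm x ≤ vecNorm (M *ᵥ x) := by
  rcases eq_or_ne x 0 with rfl | hx
  · simp [vecNorm]
  have hx' : 0 < vecNorm x := by rw [vecNorm_eq_norm]; simpa using hx
  have hunit : vecNorm ((vecNorm x)⁻¹ • x) = 1 := by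
    rw [vecNorm_smul, abs_inv, abs_of_pos hx', inv_mul_cancel₀ hx'.ne']
  have hle : sigmaMin M ≤ vecNorm (M *ᵥ ((vecNorm x)⁻¹ • x)) :=
    csInf_le ⟨0, by rintro c ⟨y, -, rfl⟩; exact Real.sqrt_nonneg _⟩ ⟨_, hunit, rfl⟩
  rwa [Matrix.mulVec_smul, vecNorm_smul, abs_inv, abs_of_pos hx', ← div_eq_inv_mul,
    le_div_iff₀ hx'] at hle

lemma sigmaMin_pos {a b : ℕ} [NeZero b] {M : Matrix (Fin a) (Fin b) ℝ}
    (hM : Function.Injective M.mulVec) : 0 < sigmaMin M := by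
  have hinj : Function.Injective (Matrix.toEuclideanLin M) :=
    (WithLp.toLp_injective 2).comp (hM.comp (WithLp.ofLp_injective 2))
  obtain ⟨K, hK, hanti⟩ :=
    (Matrix.toEuclideanLin M).exists_antilipschitzWith (LinearMap.ker_eq_bot.mpr hinj)
  have hsingle : vecNorm (Pi.single 0 1 : Fin b → ℝ) = 1 := by simp [vecNorm_eq_norm]
  refine (inv_pos.mpr (NNReal.coe_pos.mpr hK)).trans_le (le_csInf ⟨_, _, hsingle, rfl⟩ ?_)
  rintro c ⟨x, hx, rfl⟩
  have := hanti.le_mul_norm (map_zero _) (WithLp.toLp 2 x)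
  rw [← vecNorm_eq_norm, hx] at this
  rw [inv_le_iff_one_le_mul₀' (NNReal.coe_pos.mpr hK)]
  simpa [vecNorm_eq_norm] using this

lemma frobNorm_nonneg {m n : ℕ} (X : Matrix (Fin m) (Fin n) ℝ) : 0 ≤ frobNorm X :=
  Real.sqrt_nonneg _

lemma frobNorm_sq {m n : ℕ} (X : Matrix (Fin m) (Fin n) ℝ) :
    frobNorm X ^ 2 = ∑ i, ∑ j, X i j ^ 2 :=
  Real.sq_sqrt (by positivity)

lemma frobNorm_neg {m n : ℕ} (X : Matrix (Fin m) (Fin n) ℝ) : frobNorm (-X) = frobNorm X := by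
  simp [frobNorm]

lemma frobNorm_sq_eq_sum_vecNorm_col {m n : ℕ} (X : Matrix (Fin m) (Fin n) ℝ) :
    frobNorm X ^ 2 = ∑ j, vecNorm (fun i => X i j) ^ 2 := by
  simp only [frobNorm_sq, vecNorm, Real.sq_sqrt (Finset.sum_nonneg fun _ _ => sq_nonneg _)]
  exact Finset.sum_comm

lemma frobNorm_sq_eq_trace {m n : ℕ} (X : Matrix (Fin m) (Fin n) ℝ) :
    frobNorm X ^ 2 = (X * Xᵀ).trace := by
  rw [frobNorm_sq]
  simp [Matrix.trace, Matrix.mul_apply, sq]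

lemma frobNorm_sq_eq_add_of_isStarProjection {m n : ℕ} {P : Matrix (Fin n) (Fin n) ℝ}
    (hP : IsStarProjection P) (E : Matrix (Fin m) (Fin n) ℝ) :
    frobNorm E ^ 2 = frobNorm (E * P) ^ 2 + frobNorm (E * (1 - P)) ^ 2 := by
  rw [frobNorm_sq_eq_trace, frobNorm_sq_eq_trace, frobNorm_sq_eq_trace, hP.mul_mul_transpose,
    hP.one_sub.mul_mul_transpose, ← Matrix.trace_add, Matrix.mul_sub, Matrix.sub_mul,
    Matrix.mul_one, add_sub_cancel]

lemma frobNorm_mul_le_of_isStarProjection {m n : ℕ} {P : Matrix (Fin n) (Fin n) ℝ}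
    (hP : IsStarProjection P) (E : Matrix (Fin m) (Fin n) ℝ) : frobNorm (E * P) ≤ frobNorm E := by
  refine (pow_le_pow_iff_left₀ (frobNorm_nonneg _) (frobNorm_nonneg E) two_ne_zero).mp ?_
  rw [frobNorm_sq_eq_add_of_isStarProjection hP E]
  exact le_add_of_nonneg_right (sq_nonneg _)

lemma sigmaMin_mul_frobNorm_le {a b n : ℕ} (M : Matrix (Fin a) (Fin b) ℝ)
    (C : Matrix (Fin b) (Fin n) ℝ) : sigmaMin M * frobNorm C ≤ frobNorm (M * C) := by
  refine (pow_le_pow_iff_left₀ (mul_nonneg (sigmaMin_nonneg M) (frobNorm_nonneg C))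
    (frobNorm_nonneg _) two_ne_zero).mp ?_
  rw [mul_pow, frobNorm_sq_eq_sum_vecNorm_col, frobNorm_sq_eq_sum_vecNorm_col, Finset.mul_sum]
  gcongr with j
  rw [← mul_pow]
  exact pow_le_pow_left₀ (mul_nonneg (sigmaMin_nonneg M) (Real.sqrt_nonneg _))
    (sigmaMin_mul_vecNorm_le M _) 2

/-- `‖A* P_A^null‖_F ≤ ‖B A − B* A*‖_F / σ_min(B*)` when `A` has full row
rank and `B*` has full column rank. -/
theorem proj_Astar_bound {m n r : ℕ}
    (A Astar : Matrix (Fin r) (Fin n) ℝ) (B Bstar : Matrix (Fin m) (Fin r) ℝ)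
    (hA : A.rank = r) (hBstar : Bstar.rank = r) :
    frobNorm (Astar * ((1 : Matrix (Fin n) (Fin n) ℝ) - Aᵀ * (A * Aᵀ)⁻¹ * A))
      ≤ (1 / sigmaMin Bstar) * frobNorm (B * A - Bstar * Astar) := by
  obtain rfl | hr := eq_or_ne r 0
  · simp [frobNorm]
  have : NeZero r := ⟨hr⟩
  have hAA : IsUnit (A * Aᵀ) := Matrix.isUnit_mul_transpose_of_rank_eq_card (by simpa using hA)
  have hσ : 0 < sigmaMin Bstar :=
    sigmaMin_pos (Matrix.mulVec_injective_of_rank_eq_card (by simpa using hBstar))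
  have hres : (B * A - Bstar * Astar) * nullProj A = -(Bstar * (Astar * nullProj A)) := by
    rw [Matrix.sub_mul, Matrix.mul_assoc, mul_nullProj hAA, Matrix.mul_zero, zero_sub,
      Matrix.mul_assoc]
  rw [one_div_mul_eq_div, le_div_iff₀' hσ]
  calc sigmaMin Bstar * frobNorm (Astar * nullProj A)
      ≤ frobNorm (Bstar * (Astar * nullProj A)) := sigmaMin_mul_frobNorm_le _ _
    _ = frobNorm ((B * A - Bstar * Astar) * nullProj A) := by rw [hres, frobNorm_neg]
    _ ≤ frobNorm (B * A - Bstar * Astar) :=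
        frobNorm_mul_le_of_isStarProjection (isStarProjection_nullProj hAA) _
end
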